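/- arXiv:2001.10442 — 4 statements merged into one kernel-verified Lean document; each statement's English description precedes it below -/
import Mathlib

section
/- Let E be a vector space over a field K of characteristic ≠ 2 with a symmetric bilinear form ⟨·,·⟩, and let a, b, c, d ∈ E be vectors representing four distinct points of the projective space P(E) (no two are proportional). If the line ab is conjugate to the line cd (i.e., some nonzero vector in span{a,b} is orthogonal to all of span{c,d}) and the line ac is conjugate to the line bd, then the line ad is conjugate to the line bc. -/
/-- Two projective lines (given by spanning vectors) are conjugate relative to the
quadric of the symmetric bilinear form `B`: some nonzero vector of the first span
is orthogonal to every vector of the second span. -/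
def ConjugateLines {K E : Type*} [Field K] [AddCommGroup E] [Module K E]
    (B : E →ₗ[K] E →ₗ[K] K) (u v w z : E) : Prop :=
  ∃ x ∈ Submodule.span K {u, v}, x ≠ 0 ∧
    ∀ y ∈ Submodule.span K {w, z}, B x y = 0

private lemma indep2 {K E : Type*} [Field K] [AddCommGroup E] [Module K E]
    {a b : E} (ha : a ≠ 0) (hab : ¬ ∃ t : K, b = t • a)
    {s t : K} (h : s • a + t • b = 0) : s = 0 ∧ t = 0 := by
  by_cases ht : t = 0
  · subst ht
    simp only [zero_smul, add_zero, smul_eq_zero] at h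
    exact ⟨h.resolve_right ha, rfl⟩
  · exfalso
    apply hab
    refine ⟨-(t⁻¹ * s), ?_⟩
    have h' : t • b = (-s) • a := by
      rw [neg_smul, eq_neg_iff_add_eq_zero, add_comm]; exact h
    have : b = t⁻¹ • (t • b) := by rw [smul_smul, inv_mul_cancel₀ ht, one_smul]
    rw [this, h', smul_smul, neg_smul, mul_neg, neg_smul]

private lemma det_of_sol {K : Type*} [Field K] {p q r u s t : K}
    (hst : ¬ (s = 0 ∧ t = 0)) (h1 : s * p + t * q = 0) (h2 : s * r + t * u = 0) :
    p * u - q * r = 0 := by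
  by_cases hs : s = 0
  · have ht : t ≠ 0 := fun h => hst ⟨hs, h⟩
    subst hs
    simp only [zero_mul, zero_add] at h1 h2
    have hq : q = 0 := (mul_eq_zero.mp h1).resolve_left ht
    have hu : u = 0 := (mul_eq_zero.mp h2).resolve_left ht
    rw [hq, hu]; ring
  · apply mul_left_cancel₀ hs
    rw [mul_zero]
    linear_combination u * h1 - q * h2

private lemma sol_of_det {K : Type*} [Field K] {p q r u : K} (h : p * u - q * r = 0) :
    ∃ s t : K, ¬ (s = 0 ∧ t = 0) ∧ s * p + t * q = 0 ∧ s * r + t * u = 0 := by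
  by_cases hp : p = 0
  · by_cases hr : r = 0
    · exact ⟨1, 0, fun h' => one_ne_zero h'.1, by rw [hp]; ring, by rw [hr]; ring⟩
    · have hq : q = 0 := by
        have hqr : q * r = 0 := by linear_combination u * hp - h
        exact (mul_eq_zero.mp hqr).resolve_right hr
      exact ⟨-u, r, fun h' => hr h'.2, by rw [hp, hq]; ring, by ring⟩
  · exact ⟨-q, p, fun h' => hp h'.2, by ring, by linear_combination h⟩

private lemma conj_det {K E : Type*} [Field K] [AddCommGroup E] [Module K E]
    (B : E →ₗ[K] E →ₗ[K] K) {u v w z : E} (hu : u ≠ 0)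
    (huv : ¬ ∃ t : K, v = t • u)
    (h : ConjugateLines B u v w z) :
    B u w * B v z - B v w * B u z = 0 := by
  obtain ⟨x, hxmem, hx0, hx⟩ := h
  rw [Submodule.mem_span_pair] at hxmem
  obtain ⟨s, t, rfl⟩ := hxmem
  have hst : ¬ (s = 0 ∧ t = 0) := by
    rintro ⟨rfl, rfl⟩
    exact hx0 (by simp)
  have hw : B (s • u + t • v) w = 0 :=
    hx w (Submodule.subset_span (by simp))
  have hz : B (s • u + t • v) z = 0 :=
    hx z (Submodule.subset_span (by simp))
  simp only [map_add, map_smul, LinearMap.add_apply, LinearMap.smul_apply,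
    smul_eq_mul] at hw hz
  exact det_of_sol hst hw hz

theorem stmt4 {K E : Type*} [Field K] [AddCommGroup E] [Module K E]
    (hchar : ringChar K ≠ 2)
    (B : E →ₗ[K] E →ₗ[K] K) (hB : ∀ x y, B x y = B y x)
    (a b c d : E)
    (ha : a ≠ 0) (hb : b ≠ 0) (hc : c ≠ 0) (hd : d ≠ 0)
    (hab : ¬ ∃ t : K, b = t • a) (hac : ¬ ∃ t : K, c = t • a)
    (had : ¬ ∃ t : K, d = t • a) (hbc : ¬ ∃ t : K, c = t • b)
    (hbd : ¬ ∃ t : K, d = t • b) (hcd : ¬ ∃ t : K, d = t • c)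
    (h1 : ConjugateLines B a b c d)
    (h2 : ConjugateLines B a c b d) :
    ConjugateLines B a d b c := by
  have d1 := conj_det B ha hab h1
  have d2 := conj_det B ha hac h2
  -- target determinant: B a b * B d c - B d b * B a c = 0
  have d3 : B a b * B d c - B d b * B a c = 0 := by
    have e1 : B c a = B a c := hB c a
    have e2 : B d c = B c d := hB d c
    have e3 : B d b = B b d := hB d b
    have e4 : B c b = B b c := hB c b
    rw [e2, e3]
    linear_combination d2 - d1 + B a d * e4
  obtain ⟨s, t, hst, hs1, hs2⟩ := sol_of_det d3
  refine ⟨s • a + t • d, Submodule.mem_span_pair.mpr ⟨s, t, rfl⟩, ?_, ?_⟩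
  · intro h0
    exact hst (indep2 ha had h0)
  · intro y hy
    rw [Submodule.mem_span_pair] at hy
    obtain ⟨m, n, rfl⟩ := hy
    simp only [map_add, map_smul, LinearMap.add_apply, LinearMap.smul_apply,
      smul_eq_mul]
    linear_combination m * hs1 + n * hs2
end

section
/- Let E be a two-dimensional vector space over a field K of characteristic ≠ 2 with a symmetric bilinear form Q. Then Q is degenerate if and only if for all vectors a, b, c, d ∈ E, no two of which are proportional, Q(a,c)Q(b,d) = Q(a,d)Q(b,c). -/
/-!
If `Q` has a nonzero vector in its kernel, then in dimension two the map `v ↦ Q v` has rank at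
most one, so `Q a` and `Q b` are proportional linear forms and the identity holds for all
`a, b, c, d`. Conversely, for a basis `x, y` the four vectors `x, y, x + y, x - y` are pairwise
non-proportional when `2 ≠ 0`, and the identity for them reads
`2 (Q(x,x) Q(y,y) - Q(x,y) Q(y,x)) = 0`: the Gram determinant vanishes, so `Q` is degenerate.
-/

open Module LinearMap

section

variable {K E : Type*} [Field K] [AddCommGroup E] [Module K E]

theorem not_exists_smul_eq_of_linearIndependent {u v : E} (h : LinearIndependent K ![u, v]) :
    ¬∃ t : K, v = t • u ∨ u = t • v := by
  rintro ⟨t, htv | htu⟩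
  · exact neg_ne_zero.mpr one_ne_zero
      (LinearIndependent.pair_iff.mp h t (-1) (by rw [htv]; module)).2
  · exact neg_ne_zero.mpr one_ne_zero
      (LinearIndependent.pair_iff.mp h (-1) t (by rw [htu]; module)).1

theorem Module.Basis.linearIndependent_pair_of_repr_det_ne_zero (b : Basis (Fin 2) K E) {u v : E}
    (h : b.repr u 0 * b.repr v 1 - b.repr v 0 * b.repr u 1 ≠ 0) :
    LinearIndependent K ![u, v] := by
  refine (b.is_basis_iff_det.mpr (isUnit_iff_ne_zero.mpr ?_)).1
  simpa [Basis.det_apply, Matrix.det_fin_two, Basis.toMatrix_apply] using h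

theorem LinearMap.finrank_range_lt_of_ker_ne_bot {V W : Type*} [AddCommGroup V] [Module K V]
    [AddCommGroup W] [Module K W] [FiniteDimensional K V] {f : V →ₗ[K] W} (h : ker f ≠ ⊥) :
    finrank K (range f) < finrank K V := by
  have hker_pos := Submodule.one_le_finrank_iff.mpr h
  have := f.finrank_range_add_finrank_ker
  omega

theorem LinearMap.apply_mul_apply_eq_of_finrank_range_le_one {M N : Type*} [AddCommGroup M]
    [Module K M] [AddCommGroup N] [Module K N] [FiniteDimensional K M]
    (B : M →ₗ[K] N →ₗ[K] K) (h : finrank K (range B) ≤ 1) (a b : M) (c d : N) :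
    B a c * B b d = B a d * B b c := by
  have : Free K (range B) := Free.of_divisionRing K (range B)
  obtain ⟨g, hg⟩ := (finrank_le_one_iff (V := range B)).mp h
  obtain ⟨s, hs⟩ := hg ⟨B a, mem_range_self B a⟩
  obtain ⟨t, ht⟩ := hg ⟨B b, mem_range_self B b⟩
  have hBa : B a = s • (g : N →ₗ[K] K) := (congrArg Subtype.val hs).symm
  have hBb : B b = t • (g : N →ₗ[K] K) := (congrArg Subtype.val ht).symm
  simp only [hBa, hBb, smul_apply, smul_eq_mul]
  ring

theorem LinearMap.separatingLeft_iff_of_basis_fin_two (B : E →ₗ[K] E →ₗ[K] K)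
    (b : Basis (Fin 2) K E) :
    B.SeparatingLeft ↔ B (b 0) (b 0) * B (b 1) (b 1) - B (b 0) (b 1) * B (b 1) (b 0) ≠ 0 := by
  rw [← BilinForm.separatingLeft_toMatrix_iff b, Matrix.separatingLeft_iff_det_ne_zero,
    Matrix.det_fin_two]
  simp only [BilinForm.toMatrix_apply]

end

theorem stmt5_general {K E : Type*} [Field K] [AddCommGroup E] [Module K E]
    [FiniteDimensional K E] (hdim : Module.finrank K E = 2)
    (hchar : ringChar K ≠ 2)
    (Q : E →ₗ[K] E →ₗ[K] K) :
    (∃ v : E, v ≠ 0 ∧ ∀ w : E, Q v w = 0) ↔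
      ∀ a b c d : E,
        (¬ ∃ t : K, b = t • a ∨ a = t • b) →
        (¬ ∃ t : K, c = t • a ∨ a = t • c) →
        (¬ ∃ t : K, d = t • a ∨ a = t • d) →
        (¬ ∃ t : K, c = t • b ∨ b = t • c) →
        (¬ ∃ t : K, d = t • b ∨ b = t • d) →
        (¬ ∃ t : K, d = t • c ∨ c = t • d) →
        Q a c * Q b d = Q a d * Q b c := by
  constructor
  · rintro ⟨v, hv0, hv⟩ a b c d - - - - - -
    have hker : ker Q ≠ ⊥ := fun hbot =>
      hv0 ((Submodule.mem_bot K).mp (hbot ▸ mem_ker.mpr (LinearMap.ext hv)))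
    have := finrank_range_lt_of_ker_ne_bot hker
    exact Q.apply_mul_apply_eq_of_finrank_range_le_one (by omega) a b c d
  · intro h
    by_contra hdeg
    have hsep : Q.SeparatingLeft := fun v hv => by_contra fun hv0 => hdeg ⟨v, hv0, hv⟩
    have h2 : (2 : K) ≠ 0 := Ring.two_ne_zero hchar
    let e := finBasisOfFinrankEq K E hdim
    have indep : ∀ {u v : E}, e.repr u 0 * e.repr v 1 - e.repr v 0 * e.repr u 1 ≠ 0 →
        ¬∃ t : K, v = t • u ∨ u = t • v := fun hdet =>
      not_exists_smul_eq_of_linearIndependent (e.linearIndependent_pair_of_repr_det_ne_zero hdet)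
    have hsum_diff : ¬∃ t : K, e 0 - e 1 = t • (e 0 + e 1) ∨ e 0 + e 1 = t • (e 0 - e 1) :=
      indep (by norm_num [h2])
    have heq := h (e 0) (e 1) (e 0 + e 1) (e 0 - e 1) (indep (by simp)) (indep (by simp))
      (indep (by simp)) (indep (by simp)) (indep (by simp)) hsum_diff
    refine (Q.separatingLeft_iff_of_basis_fin_two e).mp hsep (mul_left_cancel₀ h2 ?_)
    simp only [map_add, map_sub] at heq
    linear_combination -heq

theorem stmt5 {K E : Type*} [Field K] [AddCommGroup E] [Module K E]
    [FiniteDimensional K E] (hdim : Module.finrank K E = 2)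
    (hchar : ringChar K ≠ 2)
    (Q : E →ₗ[K] E →ₗ[K] K) (hQ : ∀ x y, Q x y = Q y x) :
    (∃ v : E, v ≠ 0 ∧ ∀ w : E, Q v w = 0) ↔
      ∀ a b c d : E,
        (¬ ∃ t : K, b = t • a ∨ a = t • b) →
        (¬ ∃ t : K, c = t • a ∨ a = t • c) →
        (¬ ∃ t : K, d = t • a ∨ a = t • d) →
        (¬ ∃ t : K, c = t • b ∨ b = t • c) →
        (¬ ∃ t : K, d = t • b ∨ b = t • d) →
        (¬ ∃ t : K, d = t • c ∨ c = t • d) →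
        Q a c * Q b d = Q a d * Q b c :=
  stmt5_general hdim hchar Q
end

section
/- Let E be a two-dimensional vector space over a field K of characteristic ≠ 2 with a nondegenerate symmetric bilinear form Q. Then there exist vectors a, b, c, d ∈ E, no two proportional, such that Q(a,c)Q(b,d) ≠ Q(a,d)Q(b,c). -/
/-!
Take a basis `e, f` of `E` and the four points `e, f, e + f, e - f` of the projective line;
`e + f` and `e - f` are distinct points because `2 ≠ 0`. Bilinearity alone gives
`Q(e, e+f) Q(f, e-f) - Q(e, e-f) Q(f, e+f) = 2 (Q(e,f) Q(f,e) - Q(e,e) Q(f,f))`,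
and the right-hand side is `-2` times the Gram determinant of `Q` in the basis `e, f`,
which is nonzero exactly because `Q` is nondegenerate.
-/

theorem LinearIndependent.not_exists_pair_eq_smul {R M : Type*} [CommRing R] [Nontrivial R]
    [AddCommGroup M] [Module R M] {x y : M} (h : LinearIndependent R ![x, y]) :
    ¬ ∃ t : R, y = t • x ∨ x = t • y := by
  rintro ⟨t, hy | hx⟩
  · exact neg_ne_zero.mpr one_ne_zero
      (LinearIndependent.pair_iff.mp h t (-1) (by rw [hy]; module)).2
  · exact one_ne_zero (LinearIndependent.pair_iff.mp h 1 (-t) (by rw [hx]; module)).1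

theorem LinearIndependent.not_exists_combination_eq_smul {K V : Type*} [Field K]
    [AddCommGroup V] [Module K V] {x y : V} (h : LinearIndependent K ![x, y]) {a b c d : K}
    (hdet : a * d ≠ b * c) :
    ¬ ∃ t : K, c • x + d • y = t • (a • x + b • y) ∨ a • x + b • y = t • (c • x + d • y) :=
  ((LinearIndependent.pair_add_smul_add_smul_iff a b c d).mpr ⟨h, hdet⟩).not_exists_pair_eq_smul

theorem LinearIndependent.pairwise_not_exists_eq_smul_add_sub {K V : Type*} [Field K]
    [AddCommGroup V] [Module K V] {x y : V} (h : LinearIndependent K ![x, y])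
    (h2 : (2 : K) ≠ 0) :
    (¬ ∃ t : K, y = t • x ∨ x = t • y) ∧
      (¬ ∃ t : K, x + y = t • x ∨ x = t • (x + y)) ∧
      (¬ ∃ t : K, x - y = t • x ∨ x = t • (x - y)) ∧
      (¬ ∃ t : K, x + y = t • y ∨ y = t • (x + y)) ∧
      (¬ ∃ t : K, x - y = t • y ∨ y = t • (x - y)) ∧
      (¬ ∃ t : K, x - y = t • (x + y) ∨ x + y = t • (x - y)) := by
  have key (a b c d : K) (hdet : a * d ≠ b * c) := h.not_exists_combination_eq_smul hdet
  refine ⟨h.not_exists_pair_eq_smul, ?_, ?_, ?_, ?_, ?_⟩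
  · simpa using key 1 0 1 1 (by norm_num)
  · simpa [sub_eq_add_neg] using key 1 0 1 (-1) (by norm_num)
  · simpa using key 0 1 1 1 (by norm_num)
  · simpa [sub_eq_add_neg] using key 0 1 1 (-1) (by norm_num)
  · simpa [sub_eq_add_neg] using key 1 1 1 (-1) fun h => h2 (by linear_combination -h)

theorem LinearMap.Nondegenerate.mul_ne_mul_basis_fin_two {K V : Type*} [Field K]
    [AddCommGroup V] [Module K V] {Q : LinearMap.BilinForm K V} (hQ : LinearMap.Nondegenerate Q)
    (B : Module.Basis (Fin 2) K V) :
    Q (B 0) (B 0) * Q (B 1) (B 1) ≠ Q (B 0) (B 1) * Q (B 1) (B 0) := by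
  rw [← sub_ne_zero]
  simpa [Matrix.det_fin_two, LinearMap.BilinForm.toMatrix_apply] using
    (LinearMap.BilinForm.nondegenerate_iff_det_ne_zero B).mp hQ

theorem LinearMap.BilinForm.apply_add_mul_apply_sub_sub {R M : Type*} [CommRing R]
    [AddCommGroup M] [Module R M] (Q : LinearMap.BilinForm R M) (e f : M) :
    Q e (e + f) * Q f (e - f) - Q e (e - f) * Q f (e + f) =
      2 * (Q e f * Q f e - Q e e * Q f f) := by
  simp only [map_add, map_sub]
  ring

theorem stmt6_general {K E : Type*} [Field K] [AddCommGroup E] [Module K E]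
    (hdim : Module.finrank K E = 2)
    (hchar : ringChar K ≠ 2)
    (Q : E →ₗ[K] E →ₗ[K] K) (hQ : ∀ x y, Q x y = Q y x)
    (hnd : ∀ v : E, (∀ w : E, Q v w = 0) → v = 0) :
    ∃ a b c d : E,
      (¬ ∃ t : K, b = t • a ∨ a = t • b) ∧
      (¬ ∃ t : K, c = t • a ∨ a = t • c) ∧
      (¬ ∃ t : K, d = t • a ∨ a = t • d) ∧
      (¬ ∃ t : K, c = t • b ∨ b = t • c) ∧
      (¬ ∃ t : K, d = t • b ∨ b = t • d) ∧
      (¬ ∃ t : K, d = t • c ∨ c = t • d) ∧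
      Q a c * Q b d ≠ Q a d * Q b c := by
  have h2 : (2 : K) ≠ 0 := Ring.two_ne_zero hchar
  have : Module.Finite K E := Module.finite_of_finrank_eq_succ hdim
  let B := Module.finBasisOfFinrankEq K E hdim
  have hli : LinearIndependent K ![B 0, B 1] := by
    convert B.linearIndependent
    ext i; fin_cases i <;> rfl
  have hQnd : Q.Nondegenerate :=
    (LinearMap.IsRefl.nondegenerate_iff_separatingLeft fun x y h => (hQ y x).trans h).mpr hnd
  obtain ⟨hab, hac, had, hbc, hbd, hcd⟩ := hli.pairwise_not_exists_eq_smul_add_sub h2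
  refine ⟨B 0, B 1, B 0 + B 1, B 0 - B 1, hab, hac, had, hbc, hbd, hcd, ?_⟩
  rw [Ne, ← sub_eq_zero, LinearMap.BilinForm.apply_add_mul_apply_sub_sub]
  exact mul_ne_zero h2 (sub_ne_zero.mpr (hQnd.mul_ne_mul_basis_fin_two B).symm)

theorem stmt6 {K E : Type*} [Field K] [AddCommGroup E] [Module K E]
    [FiniteDimensional K E] (hdim : Module.finrank K E = 2)
    (hchar : ringChar K ≠ 2)
    (Q : E →ₗ[K] E →ₗ[K] K) (hQ : ∀ x y, Q x y = Q y x)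
    (hnd : ∀ v : E, (∀ w : E, Q v w = 0) → v = 0) :
    ∃ a b c d : E,
      (¬ ∃ t : K, b = t • a ∨ a = t • b) ∧
      (¬ ∃ t : K, c = t • a ∨ a = t • c) ∧
      (¬ ∃ t : K, d = t • a ∨ a = t • d) ∧
      (¬ ∃ t : K, c = t • b ∨ b = t • c) ∧
      (¬ ∃ t : K, d = t • b ∨ b = t • d) ∧
      (¬ ∃ t : K, d = t • c ∨ c = t • d) ∧
      Q a c * Q b d ≠ Q a d * Q b c :=
  stmt6_general hdim hchar Q hQ hnd
end

section
/- Let E be a vector space over a field K of characteristic ≠ 2 with a symmetric bilinear form ⟨·,·⟩, and let a, b, c, d ∈ E span a subspace in which a, b are linearly independent and c, d are linearly independent. The following are equivalent: (1) some nonzero vector of span{a,b} is orthogonal to every vector of span{c,d}; (2) some nonzero vector of span{c,d} is orthogonal to every vector of span{a,b}; (3) ⟨a,c⟩⟨b,d⟩ = ⟨a,d⟩⟨b,c⟩. -/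
private lemma aux9 {K E : Type*} [Field K] [AddCommGroup E] [Module K E]
    (B : E →ₗ[K] E →ₗ[K] K) (a b c d : E)
    (hab : LinearIndependent K ![a, b]) :
    (∃ x ∈ Submodule.span K {a, b}, x ≠ 0 ∧ ∀ y ∈ Submodule.span K {c, d}, B x y = 0) ↔
      B a c * B b d = B a d * B b c := by
  have hpair := LinearIndependent.pair_iff.mp hab
  constructor
  · rintro ⟨x, hx, hx0, hxo⟩
    obtain ⟨s, t, rfl⟩ := Submodule.mem_span_pair.mp hx
    have hc : s * B a c + t * B b c = 0 := by
      have := hxo c (Submodule.subset_span (by simp))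
      simpa [smul_eq_mul] using this
    have hd : s * B a d + t * B b d = 0 := by
      have := hxo d (Submodule.subset_span (by simp))
      simpa [smul_eq_mul] using this
    have hst : s ≠ 0 ∨ t ≠ 0 := by
      by_contra h
      push_neg at h
      exact hx0 (by simp [h.1, h.2])
    rcases hst with hs | ht
    · exact mul_left_cancel₀ hs (by linear_combination (B b d) * hc - (B b c) * hd)
    · exact mul_left_cancel₀ ht (by linear_combination (B a c) * hd - (B a d) * hc)
  · intro hdet
    have build : ∀ s t : K, (s ≠ 0 ∨ t ≠ 0) → s * B a c + t * B b c = 0 →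
        s * B a d + t * B b d = 0 →
        (∃ x ∈ Submodule.span K {a, b}, x ≠ 0 ∧
          ∀ y ∈ Submodule.span K {c, d}, B x y = 0) := by
      intro s t hst h1 h2
      refine ⟨s • a + t • b, Submodule.mem_span_pair.mpr ⟨s, t, rfl⟩, ?_, ?_⟩
      · intro h0
        obtain ⟨hs0, ht0⟩ := hpair s t h0
        tauto
      · intro y hy
        obtain ⟨u, v, rfl⟩ := Submodule.mem_span_pair.mp hy
        have : B (s • a + t • b) (u • c + v • d) =
            u * (s * B a c + t * B b c) + v * (s * B a d + t * B b d) := by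
          simp [smul_eq_mul]; ring
        rw [this, h1, h2]; ring
    by_cases h1 : B a c = 0 ∧ B b c = 0
    · by_cases h2 : B a d = 0 ∧ B b d = 0
      · exact build 1 0 (Or.inl one_ne_zero) (by rw [h1.1, h1.2]; ring)
          (by rw [h2.1, h2.2]; ring)
      · refine build (B b d) (-(B a d)) ?_ (by rw [h1.1, h1.2]; ring) (by ring)
        by_contra h
        push_neg at h
        exact h2 ⟨by simpa using h.2, h.1⟩
    · refine build (B b c) (-(B a c)) ?_ (by ring) (by linear_combination -hdet)
      by_contra h
      push_neg at h
      exact h1 ⟨by simpa using h.2, h.1⟩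

theorem stmt9 {K E : Type*} [Field K] [AddCommGroup E] [Module K E]
    (hchar : ringChar K ≠ 2)
    (B : E →ₗ[K] E →ₗ[K] K) (hB : ∀ x y, B x y = B y x)
    (a b c d : E)
    (hab : LinearIndependent K ![a, b]) (hcd : LinearIndependent K ![c, d]) :
    ((∃ x ∈ Submodule.span K {a, b}, x ≠ 0 ∧ ∀ y ∈ Submodule.span K {c, d}, B x y = 0) ↔
      (∃ x ∈ Submodule.span K {c, d}, x ≠ 0 ∧ ∀ y ∈ Submodule.span K {a, b}, B x y = 0)) ∧
    ((∃ x ∈ Submodule.span K {a, b}, x ≠ 0 ∧ ∀ y ∈ Submodule.span K {c, d}, B x y = 0) ↔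
      B a c * B b d = B a d * B b c) := by
  have h1 := aux9 B a b c d hab
  have h2 := aux9 B c d a b hcd
  refine ⟨?_, h1⟩
  rw [h1, h2, hB c a, hB d b, hB c b, hB d a]
  constructor <;> intro h <;> linear_combination h
end
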